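/- arXiv:1703.08592 — 2 statements merged into one kernel-verified Lean document; each statement's English description precedes it below -/
import Mathlib

section
/- Let t̃ > 0 be the unique global maximum point of m_h on (0,∞) and let c ∈ ℝ. If c ≤ 0, then the equation m_h(t) = c has exactly one solution t₁ in (0,∞), and t₁ > t̃. If 0 < c < m_h(t̃), then m_h(t) = c has exactly two solutions t₁ < t₂ in (0,∞), and t₁ < t̃ < t₂. -/
open Filter Set MeasureTheory Topology

/-- `m_h(t) = t·∫_Ω φ(t h) h² dμ − t^{ℓ*−1}·B`, interpreting the integrand as `0`
where `h = 0`. -/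
noncomputable def mh (φ : ℝ → ℝ) {Ω : Type*} [MeasurableSpace Ω] (μ : Measure Ω)
    (h : Ω → ℝ) (lstar B t : ℝ) : ℝ :=
  t * (∫ x, (if h x = 0 then 0 else φ (t * h x) * h x ^ 2) ∂μ) - t ^ (lstar - 1) * B

/-!
With `g(s) = s φ(s)` one has `m_h(t) = ∫ g(t h) h dμ − B t^{ℓ*−1}`. The upper inequality in
(φ3), `t g'' ≤ (m − 2) g'`, together with `g' ≥ 0` from (φ2), says exactly that `u ↦ g(u^{1/p})`
is concave on `[0, ∞)` for every `p ≥ m − 1`.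

For `p = ℓ* − 1` this makes `u ↦ m_h(u^{1/p})` concave. A concave function with a strict global
maximum increases strictly before it, decreases strictly after it and tends to `−∞`; since
`m_h(0) = 0` and `m_h` is continuous, the intermediate value theorem produces the solutions.

For `p = m − 1`, concavity and `g(0) = 0` give `∫ g(t h) h ≥ t^{m−1} ∫ g(h) h` for `t ≤ 1`, so
`m_h > 0` near `0` because `m < ℓ*`; hence `m_h > 0` on `(0, t̃]`, which excludes solutions there
when `c ≤ 0`. The companion bound `g(T s) ≤ T^{m−1} g(s)` for `T ≥ 1` dominates the integrands.
-/

section ConcaveShape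

variable {s : Set ℝ} {f : ℝ → ℝ} {x₀ : ℝ}

theorem ConcaveOn.strictMonoOn_inter_Iic (hf : ConcaveOn ℝ s f) (hx₀ : x₀ ∈ s)
    (hmax : ∀ x ∈ s, x ≠ x₀ → f x < f x₀) : StrictMonoOn f (s ∩ Iic x₀) := by
  intro x hx y hy hxy
  rcases (mem_Iic.1 hy.2).eq_or_lt with rfl | hy₀
  · exact hmax x hx.1 hxy.ne
  · refine hf.left_lt_of_lt_right hx.1 hx₀ ?_ (hmax y hy.1 hy₀.ne)
    rw [openSegment_eq_Ioo (hxy.trans hy₀)]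
    exact ⟨hxy, hy₀⟩

theorem ConcaveOn.strictAntiOn_inter_Ici (hf : ConcaveOn ℝ s f) (hx₀ : x₀ ∈ s)
    (hmax : ∀ x ∈ s, x ≠ x₀ → f x < f x₀) : StrictAntiOn f (s ∩ Ici x₀) := by
  intro x hx y hy hxy
  rcases (mem_Ici.1 hx.2).eq_or_lt with rfl | hx₀'
  · exact hmax y hy.1 hxy.ne'
  · refine hf.lt_right_of_left_lt hx₀ hy.1 ?_ (hmax x hx.1 hx₀'.ne')
    rw [openSegment_eq_Ioo (hx₀'.trans hxy)]
    exact ⟨hx₀', hxy⟩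

theorem ConcaveOn.tendsto_atBot {a x y : ℝ} (hf : ConcaveOn ℝ (Ici a) f) (hx : a ≤ x)
    (hxy : x < y) (hlt : f y < f x) : Tendsto f atTop atBot := by
  set δ := (f y - f x) / (y - x)
  have hδ : δ < 0 := div_neg_of_neg_of_pos (by linarith) (by linarith)
  have hle : ∀ z > y, f z ≤ (f y - δ * y) + δ * z := fun z hz => by
    have := hf.slope_anti_adjacent (mem_Ici.2 hx) (mem_Ici.2 (by linarith : a ≤ z)) hxy hz
    rw [div_le_iff₀ (sub_pos.2 hz)] at this
    linarith
  exact tendsto_atBot_mono' atTop ((eventually_gt_atTop y).mono hle)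
    (tendsto_atBot_add_const_left _ _ (tendsto_id.const_mul_atTop_of_neg hδ))

end ConcaveShape

section RpowReparametrization

variable {F : ℝ → ℝ} {p t₀ : ℝ}

theorem unimodal_of_concaveOn_comp_rpow_inv (hp : 0 < p)
    (hF : ConcaveOn ℝ (Ici 0) (fun u => F (u ^ p⁻¹))) (ht₀ : 0 ≤ t₀)
    (hmax : ∀ t ≥ 0, t ≠ t₀ → F t < F t₀) :
    StrictMonoOn F (Icc 0 t₀) ∧ StrictAntiOn F (Ici t₀) ∧ Tendsto F atTop atBot := by
  have hback : ∀ t ≥ 0, F ((t ^ p) ^ p⁻¹) = F t := fun t ht => by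
    rw [Real.rpow_rpow_inv ht hp.ne']
  have hu₀ : t₀ ^ p ∈ Ici 0 := Real.rpow_nonneg ht₀ p
  have hmaxu : ∀ u ∈ Ici (0 : ℝ), u ≠ t₀ ^ p → F (u ^ p⁻¹) < F ((t₀ ^ p) ^ p⁻¹) := by
    intro u hu hne
    rw [hback t₀ ht₀]
    refine hmax _ (Real.rpow_nonneg hu _) fun heq => hne ?_
    rw [← heq, Real.rpow_inv_rpow hu hp.ne']
  have hpow : ∀ {a b : ℝ}, 0 ≤ a → a < b → a ^ p < b ^ p := fun ha hab =>
    Real.rpow_lt_rpow ha hab hp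
  refine ⟨fun a ha b hb hab => ?_, fun a ha b hb hab => ?_, ?_⟩
  · have := (hF.strictMonoOn_inter_Iic hu₀ hmaxu)
      ⟨Real.rpow_nonneg ha.1 p, Real.rpow_le_rpow ha.1 ha.2 hp.le⟩
      ⟨Real.rpow_nonneg hb.1 p, Real.rpow_le_rpow hb.1 hb.2 hp.le⟩ (hpow ha.1 hab)
    simpa only [hback a ha.1, hback b hb.1] using this
  · have ha' : 0 ≤ a := ht₀.trans ha
    have := (hF.strictAntiOn_inter_Ici hu₀ hmaxu)
      ⟨Real.rpow_nonneg ha' p, Real.rpow_le_rpow ht₀ ha hp.le⟩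
      ⟨Real.rpow_nonneg (ha'.trans hab.le) p, Real.rpow_le_rpow ht₀ (ha.trans hab.le) hp.le⟩
      (hpow ha' hab)
    simpa only [hback a ha', hback b (ha'.trans hab.le)] using this
  · have hbot := (hF.tendsto_atBot hu₀ (lt_add_one _)
      (hmaxu _ (mem_Ici.2 (by linarith [mem_Ici.1 hu₀])) (by linarith))).comp
      (tendsto_rpow_atTop hp)
    exact hbot.congr' ((eventually_ge_atTop 0).mono fun t ht => hback t ht)

end RpowReparametrization

section LevelSets

variable {F : ℝ → ℝ} {t₀ c : ℝ}

theorem exists_gt_eq_of_lt (hF : ContinuousOn F (Ici t₀)) (hbot : Tendsto F atTop atBot)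
    (hc : c < F t₀) : ∃ t > t₀, F t = c := by
  obtain ⟨T, hTc, hT⟩ := ((hbot.eventually_lt_atBot c).and (eventually_gt_atTop t₀)).exists
  obtain ⟨t, ht, rfl⟩ := intermediate_value_Icc' hT.le (hF.mono Icc_subset_Ici_self)
    ⟨hTc.le, hc.le⟩
  exact ⟨t, ht.1.lt_of_ne (by rintro rfl; exact hc.ne rfl), rfl⟩

theorem existsUnique_pos_eq_of_nonpos (hF : ContinuousOn F (Ici 0)) (hF₀ : F 0 = 0)
    (ht₀ : 0 < t₀) (hmono : StrictMonoOn F (Icc 0 t₀)) (hanti : StrictAntiOn F (Ici t₀))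
    (hbot : Tendsto F atTop atBot) (hc : c ≤ 0) :
    (∃! t₁ : ℝ, 0 < t₁ ∧ F t₁ = c) ∧ (∀ t₁ > 0, F t₁ = c → t₀ < t₁) := by
  have hgt : ∀ t > 0, F t = c → t₀ < t := fun t ht hFt => by
    by_contra! htt
    have := hmono ⟨le_rfl, ht₀.le⟩ ⟨ht.le, htt⟩ ht
    linarith
  obtain ⟨t₁, ht₁, hFt₁⟩ := exists_gt_eq_of_lt (hF.mono (Ici_subset_Ici.2 ht₀.le)) hbot
    (hc.trans_lt (hF₀ ▸ hmono ⟨le_rfl, ht₀.le⟩ ⟨ht₀.le, le_rfl⟩ ht₀))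
  refine ⟨⟨t₁, ⟨ht₀.trans ht₁, hFt₁⟩, fun t ⟨ht, hFt⟩ => ?_⟩, hgt⟩
  exact hanti.injOn (hgt t ht hFt).le ht₁.le (hFt.trans hFt₁.symm)

theorem exists_two_eq_of_pos (hF : ContinuousOn F (Ici 0)) (hF₀ : F 0 = 0)
    (ht₀ : 0 < t₀) (hmono : StrictMonoOn F (Icc 0 t₀)) (hanti : StrictAntiOn F (Ici t₀))
    (hbot : Tendsto F atTop atBot) (hc₀ : 0 < c) (hc : c < F t₀) :
    ∃ t₁ t₂ : ℝ, 0 < t₁ ∧ t₁ < t₀ ∧ t₀ < t₂ ∧ F t₁ = c ∧ F t₂ = c ∧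
      ∀ t > 0, F t = c → t = t₁ ∨ t = t₂ := by
  obtain ⟨t₁, ht₁, hFt₁⟩ := intermediate_value_Icc ht₀.le (hF.mono Icc_subset_Ici_self)
    ⟨by rw [hF₀]; exact hc₀.le, hc.le⟩
  have ht₁₀ : 0 < t₁ := ht₁.1.lt_of_ne (by rintro rfl; exact hc₀.ne' (hF₀ ▸ hFt₁.symm))
  have ht₁t₀ : t₁ < t₀ := ht₁.2.lt_of_ne (by rintro rfl; exact hc.ne' hFt₁)
  obtain ⟨t₂, ht₂, hFt₂⟩ := exists_gt_eq_of_lt (hF.mono (Ici_subset_Ici.2 ht₀.le)) hbot hc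
  refine ⟨t₁, t₂, ht₁₀, ht₁t₀, ht₂, hFt₁, hFt₂, fun t ht hFt => ?_⟩
  rcases le_total t t₀ with htt | htt
  · exact Or.inl (hmono.injOn ⟨ht.le, htt⟩ ht₁ (hFt.trans hFt₁.symm))
  · exact Or.inr (hanti.injOn htt ht₂.le (hFt.trans hFt₂.symm))

end LevelSets

section PowerConcavity

variable {g g' g'' : ℝ → ℝ} {p : ℝ}

theorem antitoneOn_mul_rpow_one_sub (hg' : ∀ t > 0, HasDerivAt g' (g'' t) t)
    (hle : ∀ t > 0, t * g'' t ≤ (p - 1) * g' t) :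
    AntitoneOn (fun t => g' t * t ^ (1 - p)) (Ioi 0) := by
  have hd : ∀ t ∈ Ioi (0 : ℝ), HasDerivAt (fun t => g' t * t ^ (1 - p))
      (g'' t * t ^ (1 - p) + g' t * ((1 - p) * t ^ (1 - p - 1))) t := fun t ht =>
    (hg' t ht).mul (Real.hasDerivAt_rpow_const (Or.inl (ne_of_gt ht)))
  refine antitoneOn_of_hasDerivWithinAt_nonpos (convex_Ioi 0)
    (fun t ht => (hd t ht).continuousAt.continuousWithinAt)
    (fun t ht => (hd t (interior_subset ht)).hasDerivWithinAt) fun t ht => ?_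
  rw [interior_Ioi, mem_Ioi] at ht
  have hfactor : g'' t * t ^ (1 - p) + g' t * ((1 - p) * t ^ (1 - p - 1))
      = t ^ (1 - p) / t * (t * g'' t - (p - 1) * g' t) := by
    rw [Real.rpow_sub_one (ne_of_gt ht)]; field_simp; ring
  rw [hfactor]
  exact mul_nonpos_of_nonneg_of_nonpos (by positivity) (by linarith [hle t ht])

theorem concaveOn_comp_rpow_inv (hp : 0 < p) (hg : ContinuousOn g (Ici 0))
    (hg' : ∀ t > 0, HasDerivAt g (g' t) t) (hg'' : ∀ t > 0, HasDerivAt g' (g'' t) t)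
    (hle : ∀ t > 0, t * g'' t ≤ (p - 1) * g' t) :
    ConcaveOn ℝ (Ici 0) (fun v => g (v ^ p⁻¹)) := by
  have hd : ∀ v > 0, HasDerivAt (fun v => g (v ^ p⁻¹))
      (p⁻¹ * (g' (v ^ p⁻¹) * (v ^ p⁻¹) ^ (1 - p))) v := by
    intro v hv
    have hrpow : (v ^ p⁻¹) ^ (1 - p) = v ^ (p⁻¹ - 1) := by
      rw [← Real.rpow_mul hv.le]; congr 1; field_simp
    rw [hrpow]
    exact ((hg' _ (Real.rpow_pos_of_pos hv p⁻¹)).comp v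
      (Real.hasDerivAt_rpow_const (Or.inl hv.ne'))).congr_deriv (by ring)
  refine AntitoneOn.concaveOn_of_deriv (convex_Ici 0) ?_ ?_ ?_
  · exact hg.comp (Real.continuous_rpow_const (inv_pos.2 hp).le).continuousOn
      fun v hv => Real.rpow_nonneg hv _
  · rw [interior_Ici]
    exact fun v hv => (hd v hv).differentiableAt.differentiableWithinAt
  · rw [interior_Ici]
    intro a ha b hb hab
    rw [(hd a ha).deriv, (hd b hb).deriv]
    exact mul_le_mul_of_nonneg_left
      (antitoneOn_mul_rpow_one_sub hg'' hle (Real.rpow_pos_of_pos ha _)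
        (Real.rpow_pos_of_pos hb _) (Real.rpow_le_rpow ha.le hab (inv_pos.2 hp).le))
      (inv_pos.2 hp).le

theorem ConcaveOn.comp_rpow_inv_mul {q s : ℝ} (hq : 0 < q)
    (hg : ConcaveOn ℝ (Ici 0) fun u => g (u ^ q⁻¹)) (hs : 0 ≤ s) :
    ConcaveOn ℝ (Ici 0) fun u => g (u ^ q⁻¹ * s) := by
  rcases hs.eq_or_lt with rfl | hs
  · simpa using concaveOn_const (g 0) (convex_Ici (0 : ℝ))
  have hpre : LinearMap.mulRight ℝ (s ^ q) ⁻¹' Ici 0 = Ici 0 := by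
    ext u
    simp [mul_nonneg_iff_of_pos_right (Real.rpow_pos_of_pos hs q)]
  refine (hpre ▸ hg.comp_linearMap (LinearMap.mulRight ℝ (s ^ q))).congr fun u hu => ?_
  simp [Real.mul_rpow (mem_Ici.1 hu) (Real.rpow_nonneg hs.le q), Real.rpow_rpow_inv hs.le hq.ne']

theorem rpow_mul_le_apply_mul {q : ℝ} (hq : 0 < q) (hg0 : g 0 = 0)
    (hg : ConcaveOn ℝ (Ici 0) fun u => g (u ^ q⁻¹))
    {t s : ℝ} (ht₀ : 0 ≤ t) (ht₁ : t ≤ 1) (hs : 0 ≤ s) : t ^ q * g s ≤ g (t * s) := by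
  have := (hg.comp_rpow_inv_mul hq hs).2 (mem_Ici.2 le_rfl) (mem_Ici.2 zero_le_one)
    (sub_nonneg.2 (Real.rpow_le_one ht₀ ht₁ hq.le)) (Real.rpow_nonneg ht₀ q) (sub_add_cancel 1 _)
  simpa [Real.zero_rpow (inv_ne_zero hq.ne'), hg0, Real.rpow_rpow_inv ht₀ hq.ne'] using this

theorem apply_mul_le_rpow_mul {q : ℝ} (hq : 0 < q) (hg0 : g 0 = 0)
    (hg : ConcaveOn ℝ (Ici 0) fun u => g (u ^ q⁻¹))
    {T s : ℝ} (hT : 1 ≤ T) (hs : 0 ≤ s) : g (T * s) ≤ T ^ q * g s := by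
  have hT₀ : 0 < T := by linarith
  have := rpow_mul_le_apply_mul hq hg0 hg (inv_nonneg.2 hT₀.le) (inv_le_one_of_one_le₀ hT)
    (mul_nonneg hT₀.le hs)
  rwa [inv_mul_cancel_left₀ hT₀.ne', Real.inv_rpow hT₀.le,
    inv_mul_le_iff₀ (Real.rpow_pos_of_pos hT₀ q)] at this

end PowerConcavity

theorem exists_pos_sub_rpow_mul_pos {G : ℝ → ℝ} {q p A B : ℝ} (hqp : q < p) (hA : 0 < A)
    (hG : ∀ t ∈ Ioc 0 1, t ^ q * A ≤ G t) : ∃ t > 0, 0 < G t - t ^ p * B := by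
  have hlim : Tendsto (fun t : ℝ => t ^ (p - q) * B) (𝓝[>] 0) (𝓝 0) := by
    have := ((Real.continuous_rpow_const (sub_pos.2 hqp).le).tendsto 0).mul_const B
    rw [Real.zero_rpow (sub_pos.2 hqp).ne', zero_mul] at this
    exact this.mono_left nhdsWithin_le_nhds
  obtain ⟨t, htA, ht⟩ := ((hlim.eventually_lt_const hA).and (Ioc_mem_nhdsGT one_pos)).exists
  refine ⟨t, ht.1, ?_⟩
  have hsplit : t ^ p = t ^ q * t ^ (p - q) := by rw [← Real.rpow_add ht.1]; ring_nf
  have := mul_lt_mul_of_pos_left htA (Real.rpow_pos_of_pos ht.1 q)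
  rw [hsplit]
  nlinarith [hG t ht]

structure RpowConcave (g : ℝ → ℝ) (q : ℝ) : Prop where
  pos : 0 < q
  map_zero : g 0 = 0
  continuousOn : ContinuousOn g (Ici 0)
  monotoneOn : MonotoneOn g (Ici 0)
  concaveOn : ConcaveOn ℝ (Ici 0) fun u => g (u ^ q⁻¹)

noncomputable def scaledIntegral (g : ℝ → ℝ) {Ω : Type*} [MeasurableSpace Ω] (μ : Measure Ω)
    (h : Ω → ℝ) (t : ℝ) : ℝ :=
  ∫ x, g (t * h x) * h x ∂μ

section ScaledIntegral

variable {Ω : Type*} [MeasurableSpace Ω] {μ : Measure Ω} {h : Ω → ℝ} {g : ℝ → ℝ} {q : ℝ}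

theorem scaledIntegral_zero (hg0 : g 0 = 0) : scaledIntegral g μ h 0 = 0 := by
  simp [scaledIntegral, hg0]

theorem RpowConcave.norm_apply_mul_mul_le (hg : RpowConcave g q) {t T s : ℝ} (ht : t ∈ Icc 0 T)
    (hT : 1 ≤ T) (hs : 0 ≤ s) : ‖g (t * s) * s‖ ≤ T ^ q * (g s * s) := by
  have hts : 0 ≤ t * s := mul_nonneg ht.1 hs
  have hnonneg : 0 ≤ g (t * s) := hg.map_zero ▸ hg.monotoneOn self_mem_Ici hts hts
  have hmono : g (t * s) ≤ g (T * s) :=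
    hg.monotoneOn hts (mul_nonneg (by linarith) hs) (mul_le_mul_of_nonneg_right ht.2 hs)
  rw [Real.norm_of_nonneg (mul_nonneg hnonneg hs), ← mul_assoc]
  exact mul_le_mul_of_nonneg_right
    (hmono.trans (apply_mul_le_rpow_mul hg.pos hg.map_zero hg.concaveOn hT hs)) hs

theorem measurable_apply_mul_mul (hgc : ContinuousOn g (Ici 0)) (h_meas : Measurable h)
    (h_nonneg : ∀ x, 0 ≤ h x) {t : ℝ} (ht : 0 ≤ t) :
    Measurable (fun x => g (t * h x) * h x) := by
  have hcont : Continuous (fun s => g (max s 0)) :=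
    hgc.comp_continuous (continuous_id.max continuous_const) fun s => le_max_right s 0
  have heq : (fun x => g (t * h x)) = fun x => g (max (t * h x) 0) := by
    funext x; rw [max_eq_left (mul_nonneg ht (h_nonneg x))]
  refine Measurable.mul ?_ h_meas
  rw [heq]
  exact hcont.measurable.comp (h_meas.const_mul t)

theorem RpowConcave.integrable_apply_mul_mul (hg : RpowConcave g q) (h_meas : Measurable h)
    (h_nonneg : ∀ x, 0 ≤ h x) (hint : Integrable (fun x => g (h x) * h x) μ) {t : ℝ}
    (ht : 0 ≤ t) : Integrable (fun x => g (t * h x) * h x) μ :=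
  (hint.const_mul ((max t 1) ^ q)).mono'
    (measurable_apply_mul_mul hg.continuousOn h_meas h_nonneg ht).aestronglyMeasurable
    (Eventually.of_forall fun x =>
      hg.norm_apply_mul_mul_le ⟨ht, le_max_left t 1⟩ (le_max_right t 1) (h_nonneg x))

theorem RpowConcave.continuousOn_scaledIntegral (hg : RpowConcave g q) (h_meas : Measurable h)
    (h_nonneg : ∀ x, 0 ≤ h x) (hint : Integrable (fun x => g (h x) * h x) μ) :
    ContinuousOn (scaledIntegral g μ h) (Ici 0) := by
  intro t ht
  have hT : 1 ≤ t + 1 := by linarith [mem_Ici.1 ht]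
  have hloc : ContinuousOn (scaledIntegral g μ h) (Icc 0 (t + 1)) :=
    continuousOn_of_dominated
      (fun u hu =>
        (measurable_apply_mul_mul hg.continuousOn h_meas h_nonneg hu.1).aestronglyMeasurable)
      (fun u hu => Eventually.of_forall fun x => hg.norm_apply_mul_mul_le hu hT (h_nonneg x))
      (hint.const_mul _)
      (Eventually.of_forall fun x =>
        (hg.continuousOn.comp (continuous_mul_const (h x)).continuousOn
          fun u hu => mul_nonneg hu.1 (h_nonneg x)).mul continuousOn_const)
  refine (hloc t ⟨ht, by linarith⟩).mono_of_mem_nhdsWithin ?_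
  rw [← Ici_inter_Iic]
  exact inter_mem_nhdsWithin _ (Iic_mem_nhds (by linarith))

theorem RpowConcave.concaveOn_scaledIntegral_comp_rpow_inv (hg : RpowConcave g q)
    (h_meas : Measurable h) (h_nonneg : ∀ x, 0 ≤ h x)
    (hint : Integrable (fun x => g (h x) * h x) μ) {p : ℝ} (hp : 0 < p)
    (hgp : ConcaveOn ℝ (Ici 0) fun u => g (u ^ p⁻¹)) :
    ConcaveOn ℝ (Ici 0) (fun u => scaledIntegral g μ h (u ^ p⁻¹)) := by
  refine ⟨convex_Ici 0, fun u hu v hv a b ha hb hab => ?_⟩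
  have hint' : ∀ w ∈ Ici (0 : ℝ), Integrable (fun x => g (w ^ p⁻¹ * h x) * h x) μ := fun w hw =>
    hg.integrable_apply_mul_mul h_meas h_nonneg hint (Real.rpow_nonneg hw _)
  simp only [scaledIntegral, smul_eq_mul, ← integral_const_mul]
  rw [← integral_add ((hint' u hu).const_mul a) ((hint' v hv).const_mul b)]
  refine integral_mono (((hint' u hu).const_mul a).add ((hint' v hv).const_mul b))
    (hint' _ ((convex_Ici 0) hu hv ha hb hab)) fun x => ?_
  have := ((hgp.comp_rpow_inv_mul hp (h_nonneg x)).smul (h_nonneg x)).2 hu hv ha hb hab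
  simp only [smul_eq_mul] at this
  linarith

theorem RpowConcave.rpow_mul_scaledIntegral_one_le (hg : RpowConcave g q)
    (h_meas : Measurable h) (h_nonneg : ∀ x, 0 ≤ h x)
    (hint : Integrable (fun x => g (h x) * h x) μ) {t : ℝ} (ht₀ : 0 ≤ t) (ht₁ : t ≤ 1) :
    t ^ q * scaledIntegral g μ h 1 ≤ scaledIntegral g μ h t := by
  simp only [scaledIntegral, one_mul, ← integral_const_mul]
  refine integral_mono (hint.const_mul _)
    (hg.integrable_apply_mul_mul h_meas h_nonneg hint ht₀) fun x => ?_
  rw [← mul_assoc]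
  exact mul_le_mul_of_nonneg_right
    (rpow_mul_le_apply_mul hg.pos hg.map_zero hg.concaveOn ht₀ ht₁ (h_nonneg x)) (h_nonneg x)

theorem RpowConcave.unimodal_scaledIntegral_sub_rpow {p B t₀ : ℝ} (hgq : RpowConcave g q)
    (hqp : q < p) (hgp : ConcaveOn ℝ (Ici 0) fun u => g (u ^ p⁻¹)) (h_meas : Measurable h)
    (h_nonneg : ∀ x, 0 ≤ h x)
    (hint : Integrable (fun x => g (h x) * h x) μ) (hA : 0 < scaledIntegral g μ h 1)
    (ht₀ : 0 < t₀) (hmax : ∀ t > 0, t ≠ t₀ →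
      scaledIntegral g μ h t - t ^ p * B < scaledIntegral g μ h t₀ - t₀ ^ p * B) :
    StrictMonoOn (fun t => scaledIntegral g μ h t - t ^ p * B) (Icc 0 t₀) ∧
      StrictAntiOn (fun t => scaledIntegral g μ h t - t ^ p * B) (Ici t₀) ∧
      Tendsto (fun t => scaledIntegral g μ h t - t ^ p * B) atTop atBot := by
  have hp : 0 < p := hgq.pos.trans hqp
  have hconc : ConcaveOn ℝ (Ici 0)
      fun u => scaledIntegral g μ h (u ^ p⁻¹) - (u ^ p⁻¹) ^ p * B :=
    ((hgq.concaveOn_scaledIntegral_comp_rpow_inv h_meas h_nonneg hint hp hgp).sub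
      ((LinearMap.mulRight ℝ B).convexOn (convex_Ici 0))).congr fun u hu => by
        simp [Real.rpow_inv_rpow (mem_Ici.1 hu) hp.ne']
  obtain ⟨t, ht, hFt⟩ := exists_pos_sub_rpow_mul_pos (B := B) hqp hA fun t ht =>
    hgq.rpow_mul_scaledIntegral_one_le h_meas h_nonneg hint ht.1.le ht.2
  refine unimodal_of_concaveOn_comp_rpow_inv hp hconc ht₀.le fun s hs hne => ?_
  rcases hs.eq_or_lt with rfl | hs
  · simp only [scaledIntegral_zero hgq.map_zero, Real.zero_rpow hp.ne', zero_mul, sub_zero]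
    rcases eq_or_ne t t₀ with rfl | ht'
    exacts [hFt, hFt.trans (hmax t ht ht')]
  · exact hmax s hs hne

end ScaledIntegral

section IdMul

variable {φ : ℝ → ℝ}

theorem hasDerivAt_id_mul (hφ : ContDiffOn ℝ 2 φ (Ioi 0)) {t : ℝ} (ht : 0 < t) :
    HasDerivAt (fun s => s * φ s) (deriv (fun s => s * φ s) t) t :=
  (((contDiffOn_id.mul hφ).differentiableOn (by norm_num)).differentiableAt
    (Ioi_mem_nhds ht)).hasDerivAt

theorem hasDerivAt_deriv_id_mul (hφ : ContDiffOn ℝ 2 φ (Ioi 0)) {t : ℝ} (ht : 0 < t) :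
    HasDerivAt (deriv fun s => s * φ s) (deriv (deriv fun s => s * φ s) t) t :=
  ((((contDiffOn_id.mul hφ).deriv_of_isOpen isOpen_Ioi (by norm_num) :
    ContDiffOn ℝ 1 _ _).differentiableOn (by norm_num)).differentiableAt
    (Ioi_mem_nhds ht)).hasDerivAt

theorem continuousOn_id_mul (hφ : ContDiffOn ℝ 2 φ (Ioi 0))
    (hφ₀ : Tendsto (fun t => t * φ t) (𝓝[>] 0) (𝓝 0)) :
    ContinuousOn (fun s => s * φ s) (Ici 0) := by
  intro t ht
  rcases (mem_Ici.1 ht).eq_or_lt with rfl | ht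
  · rw [← Ioi_insert]
    refine continuousWithinAt_insert_self.2 ?_
    simpa [ContinuousWithinAt] using hφ₀
  · exact (hasDerivAt_id_mul hφ ht).continuousAt.continuousWithinAt

theorem deriv_id_mul_nonneg (hφ : StrictMonoOn (fun t => t * φ t) (Ioi 0)) {t : ℝ} (ht : 0 < t) :
    0 ≤ deriv (fun s => s * φ s) t := by
  rw [← derivWithin_of_isOpen isOpen_Ioi ht]
  exact hφ.monotoneOn.derivWithin_nonneg

theorem monotoneOn_id_mul (hφ : ContDiffOn ℝ 2 φ (Ioi 0))
    (hφ₀ : Tendsto (fun t => t * φ t) (𝓝[>] 0) (𝓝 0))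
    (hφ_mono : StrictMonoOn (fun t => t * φ t) (Ioi 0)) :
    MonotoneOn (fun s => s * φ s) (Ici 0) := by
  refine monotoneOn_of_deriv_nonneg (convex_Ici 0) (continuousOn_id_mul hφ hφ₀) ?_ ?_ <;>
    rw [interior_Ici]
  · exact fun t ht => (hasDerivAt_id_mul hφ ht).differentiableAt.differentiableWithinAt
  · exact fun t ht => deriv_id_mul_nonneg hφ_mono ht

theorem rpowConcave_id_mul {m p : ℝ} (hφ : ContDiffOn ℝ 2 φ (Ioi 0))
    (hφ₀ : Tendsto (fun t => t * φ t) (𝓝[>] 0) (𝓝 0))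
    (hφ_mono : StrictMonoOn (fun t => t * φ t) (Ioi 0))
    (hφ_deriv2 : ∀ t > 0, t * deriv (deriv fun s => s * φ s) t ≤
      (m - 2) * deriv (fun s => s * φ s) t)
    (hm : 1 < m) (hp : m - 1 ≤ p) : RpowConcave (fun s => s * φ s) p where
  pos := by linarith
  map_zero := zero_mul _
  continuousOn := continuousOn_id_mul hφ hφ₀
  monotoneOn := monotoneOn_id_mul hφ hφ₀ hφ_mono
  concaveOn := concaveOn_comp_rpow_inv (by linarith) (continuousOn_id_mul hφ hφ₀)
    (fun t ht => hasDerivAt_id_mul hφ ht) (fun t ht => hasDerivAt_deriv_id_mul hφ ht)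
    fun t ht => (hφ_deriv2 t ht).trans
      (mul_le_mul_of_nonneg_right (by linarith) (deriv_id_mul_nonneg hφ_mono ht))

end IdMul

theorem ite_mul_sq_eq (φ : ℝ → ℝ) (s : ℝ) :
    (if s = 0 then 0 else φ s * s ^ 2) = s * φ s * s := by
  split_ifs with hs
  · simp [hs]
  · ring

theorem mh_eq_scaledIntegral (φ : ℝ → ℝ) {Ω : Type*} [MeasurableSpace Ω] (μ : Measure Ω)
    (h : Ω → ℝ) (lstar B : ℝ) :
    mh φ μ h lstar B = fun t => scaledIntegral (fun s => s * φ s) μ h t - t ^ (lstar - 1) * B := by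
  funext t
  rw [mh, scaledIntegral, ← integral_const_mul]
  congr 1
  refine integral_congr_ae (Eventually.of_forall fun x => ?_)
  dsimp only
  split_ifs with hx
  · simp [hx]
  · ring

theorem stmt_10_general (φ : ℝ → ℝ) (ℓ m : ℝ)
    (hφ_C2 : ContDiffOn ℝ 2 φ (Set.Ioi 0))
    (hℓ : 1 < ℓ) (hℓm : ℓ ≤ m)
    (hφ1₀ : Tendsto (fun t => t * φ t) (nhdsWithin 0 (Set.Ioi 0)) (nhds 0))
    (hφ2 : StrictMonoOn (fun t => t * φ t) (Set.Ioi 0))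
    (hφ3 : ∀ t > 0,
      (ℓ - 2) * deriv (fun s => s * φ s) t ≤ t * deriv (deriv (fun s => s * φ s)) t ∧
      t * deriv (deriv (fun s => s * φ s)) t ≤ (m - 2) * deriv (fun s => s * φ s) t)
    (lstar : ℝ) (hlstar : m < lstar)
    {Ω : Type*} [MeasurableSpace Ω] (μ : Measure Ω) (h : Ω → ℝ)
    (h_meas : Measurable h) (h_nonneg : ∀ x, 0 ≤ h x)
    (h_int : Integrable (fun x => if h x = 0 then 0 else φ (h x) * h x ^ 2) μ)
    (h_pos : 0 < ∫ x, (if h x = 0 then 0 else φ (h x) * h x ^ 2) ∂μ)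
    (B : ℝ)
    (ttil : ℝ) (httil : 0 < ttil)
    (hmax : ∀ t > 0, t ≠ ttil → mh φ μ h lstar B t < mh φ μ h lstar B ttil)
    (c : ℝ) :
    (c ≤ 0 →
      (∃! t₁ : ℝ, 0 < t₁ ∧ mh φ μ h lstar B t₁ = c) ∧
      (∀ t₁ > 0, mh φ μ h lstar B t₁ = c → ttil < t₁)) ∧
    (0 < c → c < mh φ μ h lstar B ttil →
      ∃ t₁ t₂ : ℝ, 0 < t₁ ∧ t₁ < ttil ∧ ttil < t₂ ∧
        mh φ μ h lstar B t₁ = c ∧ mh φ μ h lstar B t₂ = c ∧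
        (∀ t > 0, mh φ μ h lstar B t = c → t = t₁ ∨ t = t₂)) := by
  have hm : 1 < m := hℓ.trans_le hℓm
  have hg : ∀ p, m - 1 ≤ p → RpowConcave (fun s => s * φ s) p := fun p hp =>
    rpowConcave_id_mul hφ_C2 hφ1₀ hφ2 (fun t ht => (hφ3 t ht).2) hm hp
  have hint : Integrable (fun x => h x * φ (h x) * h x) μ :=
    h_int.congr (Eventually.of_forall fun x => ite_mul_sq_eq φ (h x))
  have hA : 0 < scaledIntegral (fun s => s * φ s) μ h 1 := by
    refine h_pos.trans_eq (integral_congr_ae (Eventually.of_forall fun x => ?_))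
    simpa only [one_mul] using ite_mul_sq_eq φ (h x)
  rw [mh_eq_scaledIntegral] at hmax ⊢
  have hp : 0 < lstar - 1 := by linarith
  have hcont : ContinuousOn
      (fun t => scaledIntegral (fun s => s * φ s) μ h t - t ^ (lstar - 1) * B) (Ici 0) :=
    ((hg _ le_rfl).continuousOn_scaledIntegral h_meas h_nonneg hint).sub
      ((Real.continuous_rpow_const hp.le).continuousOn.mul continuousOn_const)
  have h₀ : scaledIntegral (fun s => s * φ s) μ h 0 - (0 : ℝ) ^ (lstar - 1) * B = 0 := by
    simp [scaledIntegral, Real.zero_rpow hp.ne']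
  obtain ⟨hmono, hanti, hbot⟩ := (hg _ le_rfl).unimodal_scaledIntegral_sub_rpow
    (by linarith) (hg (lstar - 1) (by linarith)).concaveOn h_meas h_nonneg hint hA httil hmax
  exact ⟨existsUnique_pos_eq_of_nonpos hcont h₀ httil hmono hanti hbot,
    exists_two_eq_of_pos hcont h₀ httil hmono hanti hbot⟩

/-- let `t̃ > 0` be the unique global maximum point of `m_h` on `(0,∞)` and
`c ∈ ℝ`.  If `c ≤ 0` then `m_h(t) = c` has exactly one solution `t₁ > 0`, and `t₁ > t̃`.
If `0 < c < m_h(t̃)` then `m_h(t) = c` has exactly two solutions `t₁ < t₂` in `(0,∞)`,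
with `t₁ < t̃ < t₂`. -/
theorem stmt_10 (φ : ℝ → ℝ) (ℓ m : ℝ)
    (hφ_pos : ∀ t > 0, 0 < φ t)
    (hφ_C2 : ContDiffOn ℝ 2 φ (Set.Ioi 0))
    (hℓ : 1 < ℓ) (hℓm : ℓ ≤ m)
    (hφ1₀ : Tendsto (fun t => t * φ t) (nhdsWithin 0 (Set.Ioi 0)) (nhds 0))
    (hφ1top : Tendsto (fun t => t * φ t) atTop atTop)
    (hφ2 : StrictMonoOn (fun t => t * φ t) (Set.Ioi 0))
    (hφ3 : ∀ t > 0,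
      (ℓ - 2) * deriv (fun s => s * φ s) t ≤ t * deriv (deriv (fun s => s * φ s)) t ∧
      t * deriv (deriv (fun s => s * φ s)) t ≤ (m - 2) * deriv (fun s => s * φ s) t)
    (lstar : ℝ) (hlstar : m < lstar)
    {Ω : Type*} [MeasurableSpace Ω] (μ : Measure Ω) (h : Ω → ℝ)
    (h_meas : Measurable h) (h_nonneg : ∀ x, 0 ≤ h x)
    (h_int : Integrable (fun x => if h x = 0 then 0 else φ (h x) * h x ^ 2) μ)
    (h_pos : 0 < ∫ x, (if h x = 0 then 0 else φ (h x) * h x ^ 2) ∂μ)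
    (B : ℝ) (hB : 0 < B)
    (ttil : ℝ) (httil : 0 < ttil)
    (hmax : ∀ t > 0, t ≠ ttil → mh φ μ h lstar B t < mh φ μ h lstar B ttil)
    (c : ℝ) :
    (c ≤ 0 →
      (∃! t₁ : ℝ, 0 < t₁ ∧ mh φ μ h lstar B t₁ = c) ∧
      (∀ t₁ > 0, mh φ μ h lstar B t₁ = c → ttil < t₁)) ∧
    (0 < c → c < mh φ μ h lstar B ttil →
      ∃ t₁ t₂ : ℝ, 0 < t₁ ∧ t₁ < ttil ∧ ttil < t₂ ∧
        mh φ μ h lstar B t₁ = c ∧ mh φ μ h lstar B t₂ = c ∧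
        (∀ t > 0, mh φ μ h lstar B t = c → t = t₁ ∨ t = t₂)) :=
  stmt_10_general φ ℓ m hφ_C2 hℓ hℓm hφ1₀ hφ2 hφ3 lstar hlstar μ h h_meas h_nonneg h_int h_pos B
    ttil httil hmax c
end

section
/- With the Luxemburg norm ‖u‖_{Φ*} = inf{ λ > 0 : ∫_Ω Φ*(|u|/λ) dμ ≤ 1 }, one has min{‖u‖_{Φ*}^{ℓ*}, ‖u‖_{Φ*}^{m*}} ≤ ∫_Ω Φ*(|u|) dμ ≤ max{‖u‖_{Φ*}^{ℓ*}, ‖u‖_{Φ*}^{m*}}. -/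
open Filter Set MeasureTheory

/-- The N-function `Φ(t) = ∫₀ᵗ s·φ(s) ds`. -/
noncomputable def Phi (φ : ℝ → ℝ) (t : ℝ) : ℝ := ∫ s in (0:ℝ)..t, s * φ s

/-- `G(t) = ∫₀ᵗ Φ⁻¹(s)·s^{−(N+1)/N} ds`, whose inverse is the Sobolev conjugate `Φ*`. -/
noncomputable def sobG (Phinv : ℝ → ℝ) (N t : ℝ) : ℝ :=
  ∫ s in (0:ℝ)..t, Phinv s * s ^ (-(N + 1) / N)

/-- The Luxemburg norm `‖u‖_Ψ = inf{ λ > 0 : ∫_Ω Ψ(|u|/λ) dμ ≤ 1 }`. -/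
noncomputable def luxNorm {Ω : Type*} [MeasurableSpace Ω] (μ : Measure Ω)
    (Ψ : ℝ → ℝ) (u : Ω → ℝ) : ℝ :=
  sInf {lam : ℝ | 0 < lam ∧ (∫ x, Ψ (|u x| / lam) ∂μ) ≤ 1}

/-!
Write `p t = t φ(t)`. By (φ3), `t p' - k p` is monotone for `k = ℓ - 1` and antitone for
`k = m - 1`; comparing with the behaviour at `0⁺` gives `(ℓ - 1) p ≤ t p' ≤ (m - 1) p`, and the
same argument one level down gives `ℓ Φ ≤ t p ≤ m Φ`. Hence `Φ(t) t^(-ℓ)` increases and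
`Φ(t) t^(-m)` decreases, i.e. `k^ℓ Φ(t) ≤ Φ(k t) ≤ k^m Φ(t)` for `k ≥ 1`.
Such two-sided power bounds pass to inverse functions (exponents `1/m`, `1/ℓ` for `Φ⁻¹`), to `G`
by the substitution `s = k r` (exponents `1/m - 1/N`, `1/ℓ - 1/N`), and back to `Φ* = G⁻¹`
(exponents `ℓ*`, `m*`). Finally, if `Ψ(k s)` lies between `min(k^a, k^b) Ψ(s)` and
`max(k^a, k^b) Ψ(s)`, comparing `∫ Ψ(|u|)` with `∫ Ψ(|u|/λ)` for `λ` just below and just above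
the Luxemburg norm `‖u‖` gives the claim, by continuity of `λ ↦ λ^a, λ^b`.
-/

open Topology

theorem monotoneOn_Ioi_of_hasDerivAt_nonneg {a : ℝ} {f f' : ℝ → ℝ}
    (hf : ∀ x > a, HasDerivAt f (f' x) x) (hf' : ∀ x > a, 0 ≤ f' x) :
    MonotoneOn f (Ioi a) :=
  monotoneOn_of_hasDerivWithinAt_nonneg (convex_Ioi a)
    (fun x hx => (hf x hx).continuousAt.continuousWithinAt)
    (by rw [interior_Ioi]; exact fun x hx => (hf x hx).hasDerivWithinAt)
    (by rw [interior_Ioi]; exact hf')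

theorem antitoneOn_Ioi_of_hasDerivAt_nonpos {a : ℝ} {f f' : ℝ → ℝ}
    (hf : ∀ x > a, HasDerivAt f (f' x) x) (hf' : ∀ x > a, f' x ≤ 0) :
    AntitoneOn f (Ioi a) :=
  antitoneOn_of_hasDerivWithinAt_nonpos (convex_Ioi a)
    (fun x hx => (hf x hx).continuousAt.continuousWithinAt)
    (by rw [interior_Ioi]; exact fun x hx => (hf x hx).hasDerivWithinAt)
    (by rw [interior_Ioi]; exact hf')

theorem MonotoneOn.nonneg_of_le_of_tendsto {f g : ℝ → ℝ} (hf : MonotoneOn f (Ioi 0))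
    (hgf : ∀ s > 0, g s ≤ f s) (hg : Tendsto g (𝓝[>] 0) (𝓝 0)) {t : ℝ} (ht : 0 < t) :
    0 ≤ f t := by
  refine le_of_tendsto hg ?_
  filter_upwards [Ioo_mem_nhdsGT ht] with s hs
  exact (hgf s hs.1).trans (hf hs.1 ht hs.2.le)

theorem AntitoneOn.nonpos_of_le_of_tendsto {f g : ℝ → ℝ} (hf : AntitoneOn f (Ioi 0))
    (hfg : ∀ s > 0, f s ≤ g s) (hg : Tendsto g (𝓝[>] 0) (𝓝 0)) {t : ℝ} (ht : 0 < t) :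
    f t ≤ 0 :=
  neg_nonneg.1 <| hf.neg.nonneg_of_le_of_tendsto (fun s hs => neg_le_neg (hfg s hs))
    (by simpa using hg.neg) ht

-- `f x * x ^ (-c)` is nondecreasing.
theorem rpow_mul_le_of_mul_le_mul_deriv {f f' : ℝ → ℝ} {c : ℝ}
    (hf : ∀ x > 0, HasDerivAt f (f' x) x) (hc : ∀ x > 0, c * f x ≤ x * f' x)
    {t k : ℝ} (ht : 0 < t) (hk : 1 ≤ k) : k ^ c * f t ≤ f (k * t) := by
  have hk0 : 0 < k := one_pos.trans_le hk
  have hmono : MonotoneOn (fun x => f x * x ^ (-c)) (Ioi 0) := by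
    refine monotoneOn_Ioi_of_hasDerivAt_nonneg
      (fun x hx => (hf x hx).mul (Real.hasDerivAt_rpow_const (Or.inl hx.ne'))) fun x hx => ?_
    have hx' : (0:ℝ) < x := hx
    have : f' x * x ^ (-c) + f x * (-c * x ^ (-c - 1)) = x ^ (-c - 1) * (x * f' x - c * f x) := by
      rw [Real.rpow_sub hx', Real.rpow_one]; field_simp; ring
    rw [this]
    exact mul_nonneg (Real.rpow_nonneg hx'.le _) (sub_nonneg.2 (hc x hx))
  have h := hmono ht (mul_pos hk0 ht) (le_mul_of_one_le_left ht.le hk)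
  simp only [Real.mul_rpow hk0.le ht.le, Real.rpow_neg hk0.le, Real.rpow_neg ht.le] at h
  have hkc := Real.rpow_pos_of_pos hk0 c
  have htc := Real.rpow_pos_of_pos ht c
  calc k ^ c * f t = k ^ c * t ^ c * (f t * (t ^ c)⁻¹) := by field_simp
    _ ≤ k ^ c * t ^ c * (f (k * t) * ((k ^ c)⁻¹ * (t ^ c)⁻¹)) := by gcongr
    _ = f (k * t) := by field_simp

theorem le_rpow_mul_of_mul_deriv_le_mul {f f' : ℝ → ℝ} {c : ℝ}
    (hf : ∀ x > 0, HasDerivAt f (f' x) x) (hc : ∀ x > 0, x * f' x ≤ c * f x)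
    {t k : ℝ} (ht : 0 < t) (hk : 1 ≤ k) : f (k * t) ≤ k ^ c * f t := by
  have := rpow_mul_le_of_mul_le_mul_deriv (f := -f) (f' := -f') (fun x hx => (hf x hx).neg)
    (fun x hx => by simpa using hc x hx) ht hk
  simpa using this

section Density

variable {p : ℝ → ℝ}

theorem hasDerivAt_deriv_of_contDiffOn_Ioi (hp : ContDiffOn ℝ 2 p (Ioi 0)) {x : ℝ} (hx : 0 < x) :
    HasDerivAt p (deriv p x) x ∧ HasDerivAt (deriv p) (deriv (deriv p) x) x := by
  have hp' : ContDiffOn ℝ 1 (deriv p) (Ioi 0) := hp.deriv_of_isOpen isOpen_Ioi (by norm_num)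
  exact ⟨((hp.contDiffAt (Ioi_mem_nhds hx)).differentiableAt (by norm_num)).hasDerivAt,
    ((hp'.contDiffAt (Ioi_mem_nhds hx)).differentiableAt (by norm_num)).hasDerivAt⟩

theorem hasDerivAt_mul_deriv_sub (hp : ContDiffOn ℝ 2 p (Ioi 0)) (k : ℝ) {x : ℝ} (hx : 0 < x) :
    HasDerivAt (fun y => y * deriv p y - k * p y)
      (x * deriv (deriv p) x - (k - 1) * deriv p x) x := by
  obtain ⟨h1, h2⟩ := hasDerivAt_deriv_of_contDiffOn_Ioi hp hx
  exact (((hasDerivAt_id' x).mul h2).sub (h1.const_mul k)).congr_deriv (by ring)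

theorem sub_one_mul_le_mul_deriv {ℓ : ℝ} (hp : ContDiffOn ℝ 2 p (Ioi 0))
    (hmono : MonotoneOn p (Ioi 0)) (hp_lim : Tendsto p (𝓝[>] 0) (𝓝 0))
    (hℓ : ∀ x > 0, (ℓ - 2) * deriv p x ≤ x * deriv (deriv p) x) {t : ℝ} (ht : 0 < t) :
    (ℓ - 1) * p t ≤ t * deriv p t := by
  have hC : MonotoneOn (fun y => y * deriv p y - (ℓ - 1) * p y) (Ioi 0) :=
    monotoneOn_Ioi_of_hasDerivAt_nonneg (fun x hx => hasDerivAt_mul_deriv_sub hp _ hx)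
      fun x hx => by linarith [hℓ x hx]
  have hderiv_nonneg : ∀ x > 0, 0 ≤ deriv p x := fun x hx => by
    simpa only [derivWithin_of_isOpen isOpen_Ioi (mem_Ioi.2 hx)] using
      hmono.derivWithin_nonneg (x := x)
  have := hC.nonneg_of_le_of_tendsto (g := fun y => -((ℓ - 1) * p y))
    (fun s hs => by nlinarith [hderiv_nonneg s hs])
    (by simpa using (hp_lim.const_mul (ℓ - 1)).neg) ht
  linarith

/-- If `x p' - k p` is antitone and `c := t p'(t) - k p(t)` were positive, then `p - c log` would
be monotone on `(0, t]`, forcing `p` to `-∞` at `0`. -/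
theorem mul_deriv_le_of_antitoneOn {p' : ℝ → ℝ} {k : ℝ} (hk : 0 ≤ k)
    (hp : ∀ x > 0, HasDerivAt p (p' x) x) (hpos : ∀ x > 0, 0 < p x)
    (hanti : AntitoneOn (fun x => x * p' x - k * p x) (Ioi 0)) {t : ℝ} (ht : 0 < t) :
    t * p' t ≤ k * p t := by
  by_contra! hcon
  set c := t * p' t - k * p t
  have hc : 0 < c := by simp only [c]; linarith
  have hlog : MonotoneOn (fun x => p x - c * Real.log x) (Ioc 0 t) := by
    refine monotoneOn_of_hasDerivWithinAt_nonneg (f' := fun x => p' x - c * x⁻¹) (convex_Ioc 0 t)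
      (fun x hx => ((hp x hx.1).sub ((Real.hasDerivAt_log hx.1.ne').const_mul c))
        |>.continuousAt.continuousWithinAt) (fun x hx => ?_) fun x hx => ?_
    · rw [interior_Ioc] at hx
      exact ((hp x hx.1).sub ((Real.hasDerivAt_log hx.1.ne').const_mul c)).hasDerivWithinAt
    · rw [interior_Ioc] at hx
      have h1 : c ≤ x * p' x - k * p x := hanti hx.1 ht hx.2.le
      have h2 : 0 ≤ k * p x := mul_nonneg hk (hpos x hx.1).le
      rw [sub_nonneg, ← div_eq_mul_inv, div_le_iff₀ hx.1]
      linarith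
  have hbot : Tendsto (fun x => p t - c * Real.log t + c * Real.log x) (𝓝[>] 0) atBot :=
    tendsto_atBot_add_const_left _ _ (Real.tendsto_log_nhdsGT_zero.const_mul_atBot hc)
  obtain ⟨x, hx, hneg⟩ :=
    (Filter.Eventually.and (Ioo_mem_nhdsGT ht) (hbot.eventually (eventually_lt_atBot 0))).exists
  have := hlog ⟨hx.1, hx.2.le⟩ ⟨ht, le_rfl⟩ hx.2.le
  linarith [hpos x hx.1]

theorem mul_deriv_le_sub_one_mul {m : ℝ} (hp : ContDiffOn ℝ 2 p (Ioi 0))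
    (hpos : ∀ x > 0, 0 < p x) (hm : 1 ≤ m)
    (hm' : ∀ x > 0, x * deriv (deriv p) x ≤ (m - 2) * deriv p x) {t : ℝ} (ht : 0 < t) :
    t * deriv p t ≤ (m - 1) * p t :=
  mul_deriv_le_of_antitoneOn (sub_nonneg.2 hm)
    (fun x hx => (hasDerivAt_deriv_of_contDiffOn_Ioi hp hx).1) hpos
    (antitoneOn_Ioi_of_hasDerivAt_nonpos (fun x hx => hasDerivAt_mul_deriv_sub hp _ hx)
      fun x hx => by linarith [hm' x hx]) ht

end Density

theorem strictMonoOn_integral_of_pos {f : ℝ → ℝ}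
    (hf : ∀ t ≥ 0, IntervalIntegrable f volume 0 t) (hpos : ∀ t > 0, 0 < f t) :
    StrictMonoOn (fun t => ∫ s in (0:ℝ)..t, f s) (Ici 0) := by
  intro a (ha : 0 ≤ a) b (hb : 0 ≤ b) hab
  have hab' : IntervalIntegrable f volume a b :=
    (hf b hb).mono_set (by rw [uIcc_of_le hb, uIcc_of_le hab.le]; exact Icc_subset_Icc ha le_rfl)
  have := intervalIntegral.integral_interval_sub_left (hf b hb) (hf a ha)
  have := intervalIntegral.intervalIntegral_pos_of_pos_on hab'
    (fun x hx => hpos x (ha.trans_lt hx.1)) hab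
  simp only
  linarith

section Primitive

variable {p : ℝ → ℝ}

theorem ContinuousOn.intervalIntegrable_zero_of_Ici (hcont : ContinuousOn p (Ici 0)) {t : ℝ}
    (ht : 0 ≤ t) : IntervalIntegrable p volume 0 t :=
  (hcont.mono (by rw [uIcc_of_le ht]; exact Icc_subset_Ici_self)).intervalIntegrable

theorem hasDerivAt_integral_of_continuousOn_Ici (hcont : ContinuousOn p (Ici 0)) {t : ℝ}
    (ht : 0 < t) : HasDerivAt (fun t => ∫ s in (0:ℝ)..t, p s) (p t) t :=
  intervalIntegral.integral_hasDerivAt_right (hcont.intervalIntegrable_zero_of_Ici ht.le)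
    ((hcont.mono Ioi_subset_Ici_self).stronglyMeasurableAtFilter isOpen_Ioi t ht)
    (hcont.continuousAt (Ici_mem_nhds ht))

theorem integral_nonneg_of_monotoneOn (hmono : MonotoneOn p (Ici 0)) (hp0 : p 0 = 0) {t : ℝ}
    (ht : 0 ≤ t) : 0 ≤ ∫ s in (0:ℝ)..t, p s :=
  intervalIntegral.integral_nonneg ht fun _ hs => hp0 ▸ hmono self_mem_Ici hs.1 hs.1

theorem integral_le_mul_of_monotoneOn (hcont : ContinuousOn p (Ici 0))
    (hmono : MonotoneOn p (Ici 0)) {t : ℝ} (ht : 0 ≤ t) : ∫ s in (0:ℝ)..t, p s ≤ t * p t := by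
  have := intervalIntegral.integral_mono_on ht (hcont.intervalIntegrable_zero_of_Ici ht)
    intervalIntegrable_const fun s hs => hmono hs.1 (hs.1.trans hs.2) hs.2
  simpa using this

theorem tendsto_id_mul_nhdsGT_zero (hcont : ContinuousOn p (Ici 0)) (hp0 : p 0 = 0) :
    Tendsto (fun s => s * p s) (𝓝[>] 0) (𝓝 0) := by
  have hp := (hcont 0 self_mem_Ici).tendsto.mono_left (nhdsWithin_mono _ Ioi_subset_Ici_self)
  rw [hp0] at hp
  simpa using (tendsto_nhdsWithin_of_tendsto_nhds tendsto_id).mul hp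

theorem mul_integral_le_mul_apply {p' : ℝ → ℝ} {ℓ : ℝ} (hℓ : 0 ≤ ℓ)
    (hcont : ContinuousOn p (Ici 0)) (hmono : MonotoneOn p (Ici 0)) (hp0 : p 0 = 0)
    (hp : ∀ x > 0, HasDerivAt p (p' x) x) (hℓp : ∀ x > 0, (ℓ - 1) * p x ≤ x * p' x)
    {t : ℝ} (ht : 0 < t) : ℓ * ∫ s in (0:ℝ)..t, p s ≤ t * p t := by
  have hE : MonotoneOn (fun x => x * p x - ℓ * ∫ s in (0:ℝ)..x, p s) (Ioi 0) :=
    monotoneOn_Ioi_of_hasDerivAt_nonneg (fun x hx => (((hasDerivAt_id' x).mul (hp x hx)).sub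
      ((hasDerivAt_integral_of_continuousOn_Ici hcont hx).const_mul ℓ)))
      fun x hx => by linarith [hℓp x hx]
  have := hE.nonneg_of_le_of_tendsto (g := fun s => (1 - ℓ) * (s * p s))
    (fun s hs => by nlinarith [integral_le_mul_of_monotoneOn hcont hmono hs.le])
    (by simpa using (tendsto_id_mul_nhdsGT_zero hcont hp0).const_mul (1 - ℓ)) ht
  linarith

theorem mul_apply_le_mul_integral {p' : ℝ → ℝ} {m : ℝ} (hm : 0 ≤ m)
    (hcont : ContinuousOn p (Ici 0)) (hmono : MonotoneOn p (Ici 0)) (hp0 : p 0 = 0)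
    (hp : ∀ x > 0, HasDerivAt p (p' x) x) (hmp : ∀ x > 0, x * p' x ≤ (m - 1) * p x)
    {t : ℝ} (ht : 0 < t) : t * p t ≤ m * ∫ s in (0:ℝ)..t, p s := by
  have hD : AntitoneOn (fun x => x * p x - m * ∫ s in (0:ℝ)..x, p s) (Ioi 0) :=
    antitoneOn_Ioi_of_hasDerivAt_nonpos (fun x hx => (((hasDerivAt_id' x).mul (hp x hx)).sub
      ((hasDerivAt_integral_of_continuousOn_Ici hcont hx).const_mul m)))
      fun x hx => by linarith [hmp x hx]
  have := hD.nonpos_of_le_of_tendsto (g := fun s => s * p s)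
    (fun s hs => by nlinarith [integral_nonneg_of_monotoneOn hmono hp0 hs.le])
    (tendsto_id_mul_nhdsGT_zero hcont hp0) ht
  linarith

end Primitive

def ScalesBetween (F : ℝ → ℝ) (a b : ℝ) : Prop :=
  ∀ t ≥ 0, ∀ k ≥ 1, k ^ a * F t ≤ F (k * t) ∧ F (k * t) ≤ k ^ b * F t

theorem ScalesBetween.rightInverse {F g : ℝ → ℝ} {a b : ℝ} (hF : ScalesBetween F a b)
    (ha : 0 < a) (hb : 0 < b) (hmono : StrictMonoOn F (Ici 0))
    (hg : ∀ s ∈ Ici (0:ℝ), 0 ≤ g s ∧ F (g s) = s) : ScalesBetween g b⁻¹ a⁻¹ := by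
  intro s hs k hk
  have hk0 : 0 ≤ k := zero_le_one.trans hk
  obtain ⟨hgs, hFgs⟩ := hg s hs
  obtain ⟨hgks, hFgks⟩ := hg (k * s) (mul_nonneg hk0 hs)
  have hpow : ∀ c : ℝ, c ≠ 0 → (k ^ c⁻¹) ^ c * F (g s) = F (g (k * s)) := fun c hc => by
    rw [← Real.rpow_mul hk0, inv_mul_cancel₀ hc, Real.rpow_one, hFgs, hFgks]
  constructor
  · refine (hmono.le_iff_le (mem_Ici.2 (by positivity)) (mem_Ici.2 hgks)).1 ?_
    rw [← hpow b hb.ne']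
    exact (hF _ hgs _ (Real.one_le_rpow hk (inv_nonneg.2 hb.le))).2
  · refine (hmono.le_iff_le (mem_Ici.2 hgks) (mem_Ici.2 (by positivity))).1 ?_
    rw [← hpow a ha.ne']
    exact (hF _ hgs _ (Real.one_le_rpow hk (inv_nonneg.2 ha.le))).1

theorem ScalesBetween.monotoneOn_Ioi {g : ℝ → ℝ} {a b : ℝ} (hg : ScalesBetween g a b)
    (ha : 0 ≤ a) (hg0 : ∀ s ≥ 0, 0 ≤ g s) : MonotoneOn g (Ioi 0) := by
  intro r (hr : 0 < r) s _ hrs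
  have h := (hg r hr.le (s / r) ((one_le_div hr).2 hrs)).1
  rw [div_mul_cancel₀ s hr.ne'] at h
  exact le_trans (le_mul_of_one_le_left (hg0 r hr.le)
    (Real.one_le_rpow ((one_le_div hr).2 hrs) ha)) h

section WeightedPrimitive

variable {g : ℝ → ℝ} {a b e : ℝ}

theorem ScalesBetween.intervalIntegrable_mul_rpow (hg : ScalesBetween g a b) (ha : 0 ≤ a)
    (hg0 : ∀ s ≥ 0, 0 ≤ g s) (hae : -1 < a + e) {s : ℝ} (hs : 0 ≤ s) :
    IntervalIntegrable (fun r => g r * r ^ e) volume 0 s := by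
  rw [intervalIntegrable_iff_integrableOn_Ioc_of_le hs]
  rcases hs.eq_or_lt with rfl | hs
  · simp
  have hdom : IntegrableOn (fun r => g s * (s ^ a)⁻¹ * r ^ (a + e)) (Ioc 0 s) :=
    (intervalIntegrable_iff_integrableOn_Ioc_of_le hs.le).1
      ((intervalIntegral.intervalIntegrable_rpow' hae).const_mul _)
  refine hdom.mono' ?_ ?_
  · exact ((aemeasurable_restrict_of_monotoneOn measurableSet_Ioc
      ((hg.monotoneOn_Ioi ha hg0).mono Ioc_subset_Ioi_self)).mul
      (measurable_id.pow_const e).aemeasurable).aestronglyMeasurable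
  filter_upwards [ae_restrict_mem measurableSet_Ioc] with r ⟨hr, hrs⟩
  have hgr : g r * s ^ a ≤ g s * r ^ a := by
    have h := (hg r hr.le (s / r) ((one_le_div hr).2 hrs)).1
    rw [div_mul_cancel₀ s hr.ne', Real.div_rpow hs.le hr.le, div_mul_eq_mul_div,
      div_le_iff₀ (Real.rpow_pos_of_pos hr a)] at h
    linarith
  have hre := Real.rpow_pos_of_pos hr e
  have hsa := Real.rpow_pos_of_pos hs a
  rw [Real.norm_eq_abs, abs_of_nonneg (mul_nonneg (hg0 r hr.le) hre.le), Real.rpow_add hr]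
  calc g r * r ^ e = (g r * s ^ a) * (s ^ a)⁻¹ * r ^ e := by field_simp
    _ ≤ (g s * r ^ a) * (s ^ a)⁻¹ * r ^ e := by gcongr
    _ = g s * (s ^ a)⁻¹ * (r ^ a * r ^ e) := by ring

theorem ScalesBetween.integral_mul_rpow (hg : ScalesBetween g a b) (ha : 0 ≤ a)
    (hg0 : ∀ s ≥ 0, 0 ≤ g s) (hae : -1 < a + e) :
    ScalesBetween (fun t => ∫ r in (0:ℝ)..t, g r * r ^ e) (1 + a + e) (1 + b + e) := by
  intro s hs k hk
  have hk0 : 0 < k := one_pos.trans_le hk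
  have hsub : ∫ r in (0:ℝ)..k * s, g r * r ^ e = k * ∫ x in (0:ℝ)..s, g (k * x) * (k * x) ^ e := by
    rw [intervalIntegral.integral_comp_mul_left (fun r => g r * r ^ e) hk0.ne', mul_zero,
      smul_eq_mul, mul_inv_cancel_left₀ hk0.ne']
  have hint := hg.intervalIntegrable_mul_rpow ha hg0 hae hs
  have hint_k : IntervalIntegrable (fun x => g (k * x) * (k * x) ^ e) volume 0 s := by
    simpa [hk0.ne'] using
      (hg.intervalIntegrable_mul_rpow ha hg0 hae (mul_nonneg hk0.le hs)).comp_mul_left (c := k)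
  have hpow : ∀ c, k ^ (1 + c + e) = k * (k ^ c * k ^ e) := fun c => by
    rw [Real.rpow_add hk0, Real.rpow_add hk0, Real.rpow_one, mul_assoc]
  simp only
  rw [hsub, hpow, hpow, mul_assoc k, mul_assoc k,
    ← intervalIntegral.integral_const_mul (k ^ a * k ^ e),
    ← intervalIntegral.integral_const_mul (k ^ b * k ^ e)]
  have hke := Real.rpow_nonneg hk0.le e
  constructor
  · refine mul_le_mul_of_nonneg_left (intervalIntegral.integral_mono_on hs
      (hint.const_mul _) hint_k fun x hx => ?_) hk0.le
    rw [Real.mul_rpow hk0.le hx.1]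
    have := (hg x hx.1 k hk).1
    have := Real.rpow_nonneg hx.1 e
    calc k ^ a * k ^ e * (g x * x ^ e) = (k ^ a * g x) * (k ^ e * x ^ e) := by ring
      _ ≤ g (k * x) * (k ^ e * x ^ e) := by gcongr
  · refine mul_le_mul_of_nonneg_left (intervalIntegral.integral_mono_on hs
      hint_k (hint.const_mul _) fun x hx => ?_) hk0.le
    rw [Real.mul_rpow hk0.le hx.1]
    have := (hg x hx.1 k hk).2
    have := Real.rpow_nonneg hx.1 e
    calc g (k * x) * (k ^ e * x ^ e) ≤ (k ^ b * g x) * (k ^ e * x ^ e) := by gcongr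
      _ = k ^ b * k ^ e * (g x * x ^ e) := by ring

end WeightedPrimitive

namespace ScalesBetween

variable {Ψ : ℝ → ℝ} {a b : ℝ}

theorem rpow_mul_le_of_le_one (hΨ : ScalesBetween Ψ a b) {k s : ℝ} (hk0 : 0 < k) (hk1 : k ≤ 1)
    (hs : 0 ≤ s) : k ^ b * Ψ s ≤ Ψ (k * s) ∧ Ψ (k * s) ≤ k ^ a * Ψ s := by
  have h := hΨ (k * s) (mul_nonneg hk0.le hs) k⁻¹ ((one_le_inv₀ hk0).2 hk1)
  rw [inv_mul_cancel_left₀ hk0.ne', Real.inv_rpow hk0.le, Real.inv_rpow hk0.le, inv_mul_eq_div,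
    inv_mul_eq_div, div_le_iff₀ (Real.rpow_pos_of_pos hk0 a),
    le_div_iff₀ (Real.rpow_pos_of_pos hk0 b)] at h
  exact ⟨by linarith [h.2], by linarith [h.1]⟩

theorem min_rpow_mul_le (hΨ : ScalesBetween Ψ a b) (hab : a ≤ b) {k s : ℝ} (hk : 0 < k)
    (hs : 0 ≤ s) : min (k ^ a) (k ^ b) * Ψ s ≤ Ψ (k * s) := by
  rcases le_total 1 k with hk1 | hk1
  · rw [min_eq_left (Real.rpow_le_rpow_of_exponent_le hk1 hab)]
    exact (hΨ s hs k hk1).1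
  · rw [min_eq_right (Real.rpow_le_rpow_of_exponent_ge hk hk1 hab)]
    exact (hΨ.rpow_mul_le_of_le_one hk hk1 hs).1

theorem le_max_rpow_mul (hΨ : ScalesBetween Ψ a b) (hab : a ≤ b) {k s : ℝ} (hk : 0 < k)
    (hs : 0 ≤ s) : Ψ (k * s) ≤ max (k ^ a) (k ^ b) * Ψ s := by
  rcases le_total 1 k with hk1 | hk1
  · rw [max_eq_right (Real.rpow_le_rpow_of_exponent_le hk1 hab)]
    exact (hΨ s hs k hk1).2
  · rw [max_eq_left (Real.rpow_le_rpow_of_exponent_ge hk hk1 hab)]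
    exact (hΨ.rpow_mul_le_of_le_one hk hk1 hs).2

end ScalesBetween

theorem MonotoneOn.measurable_comp_of_nonneg {Ω : Type*} [MeasurableSpace Ω] {Ψ : ℝ → ℝ}
    (hΨ : MonotoneOn Ψ (Ici 0)) {v : Ω → ℝ} (hv : Measurable v) (hv0 : ∀ x, 0 ≤ v x) :
    Measurable fun x => Ψ (v x) := by
  have hmono : Monotone fun r => Ψ (max r 0) := fun r s hrs =>
    hΨ (le_max_right r 0) (le_max_right s 0) (max_le_max_right 0 hrs)
  have : (fun x => Ψ (v x)) = (fun r => Ψ (max r 0)) ∘ v :=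
    funext fun x => by simp [max_eq_left (hv0 x)]
  exact this ▸ hmono.measurable.comp hv

section Luxemburg

variable {Ω : Type*} [MeasurableSpace Ω] {μ : Measure Ω} {Ψ : ℝ → ℝ} {a b : ℝ} {u : Ω → ℝ}

theorem min_rpow_luxNorm_le_integral (hΨ : ScalesBetween Ψ a b) (ha : 0 < a) (hab : a ≤ b)
    (hΨ0 : ∀ s ≥ 0, 0 ≤ Ψ s) (hint : Integrable (fun x => Ψ |u x|) μ) :
    min (luxNorm μ Ψ u ^ a) (luxNorm μ Ψ u ^ b) ≤ ∫ x, Ψ |u x| ∂μ := by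
  have hb : 0 < b := ha.trans_le hab
  have hI : 0 ≤ ∫ x, Ψ |u x| ∂μ := integral_nonneg fun x => hΨ0 _ (abs_nonneg _)
  have hk0 : 0 ≤ luxNorm μ Ψ u := Real.sInf_nonneg fun l hl => hl.1.le
  rcases hk0.eq_or_lt with hk | hk
  · rwa [← hk, Real.zero_rpow ha.ne', Real.zero_rpow hb.ne', min_self]
  have hbelow : ∀ l ∈ Ioo 0 (luxNorm μ Ψ u), min (l ^ a) (l ^ b) ≤ ∫ x, Ψ |u x| ∂μ := by
    rintro l ⟨hl0, hlk⟩
    have hρ : 1 < ∫ x, Ψ (|u x| / l) ∂μ := by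
      by_contra! h
      exact hlk.not_ge (csInf_le ⟨0, fun _ h => h.1.le⟩ ⟨hl0, h⟩)
    have hmin0 : 0 ≤ min (l ^ a) (l ^ b) :=
      le_min (Real.rpow_nonneg hl0.le a) (Real.rpow_nonneg hl0.le b)
    calc min (l ^ a) (l ^ b) ≤ min (l ^ a) (l ^ b) * ∫ x, Ψ (|u x| / l) ∂μ :=
          le_mul_of_one_le_right hmin0 hρ.le
      _ = ∫ x, min (l ^ a) (l ^ b) * Ψ (|u x| / l) ∂μ := (integral_const_mul _ _).symm
      _ ≤ ∫ x, Ψ |u x| ∂μ := by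
        refine integral_mono_of_nonneg
          (ae_of_all _ fun x => mul_nonneg hmin0 (hΨ0 _ (by positivity))) hint (ae_of_all _ ?_)
        intro x
        simpa [mul_div_cancel₀ _ hl0.ne'] using
          hΨ.min_rpow_mul_le hab hl0 (div_nonneg (abs_nonneg (u x)) hl0.le)
  have hcont : Continuous fun l : ℝ => min (l ^ a) (l ^ b) :=
    (Real.continuous_rpow_const ha.le).min (Real.continuous_rpow_const hb.le)
  have hk_mem : luxNorm μ Ψ u ∈ closure (Ioo 0 (luxNorm μ Ψ u)) := by
    rw [closure_Ioo hk.ne]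
    exact right_mem_Icc.2 hk.le
  exact (isClosed_le hcont continuous_const).closure_subset_iff.2 hbelow hk_mem

theorem integral_le_max_rpow_luxNorm (hΨ : ScalesBetween Ψ a b) (ha : 0 < a) (hab : a ≤ b)
    (hΨ0 : ∀ s ≥ 0, 0 ≤ Ψ s) (hmono : MonotoneOn Ψ (Ici 0)) (hu : Measurable u)
    (hint : Integrable (fun x => Ψ |u x|) μ) :
    ∫ x, Ψ |u x| ∂μ ≤ max (luxNorm μ Ψ u ^ a) (luxNorm μ Ψ u ^ b) := by
  have hb : 0 < b := ha.trans_le hab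
  set I := ∫ x, Ψ |u x| ∂μ
  have hscaled : ∀ l > 0, ∀ x, Ψ (|u x| / l) ≤ max (l⁻¹ ^ a) (l⁻¹ ^ b) * Ψ |u x| :=
    fun l hl x => by
      simpa [div_eq_inv_mul] using hΨ.le_max_rpow_mul hab (inv_pos.2 hl) (abs_nonneg (u x))
  have hint_l : ∀ l > 0, Integrable (fun x => Ψ (|u x| / l)) μ := fun l hl =>
    (hint.const_mul _).mono'
      ((hmono.measurable_comp_of_nonneg (hu.abs.div_const l) fun x => by positivity)
        |>.aestronglyMeasurable)
      (ae_of_all _ fun x => by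
        rw [Real.norm_eq_abs, abs_of_nonneg (hΨ0 _ (by positivity))]
        exact hscaled l hl x)
  have hlim : Tendsto (fun l : ℝ => max (l⁻¹ ^ a) (l⁻¹ ^ b) * I) atTop (𝓝 0) := by
    have h : ∀ c : ℝ, 0 < c → Tendsto (fun l : ℝ => l⁻¹ ^ c) atTop (𝓝 0) := fun c hc => by
      simpa [Function.comp_def, Real.zero_rpow hc.ne'] using
        ((Real.continuous_rpow_const hc.le).tendsto 0).comp tendsto_inv_atTop_zero
    simpa using ((h a ha).max (h b hb)).mul_const I
  have hne : {l : ℝ | 0 < l ∧ ∫ x, Ψ (|u x| / l) ∂μ ≤ 1}.Nonempty := by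
    obtain ⟨l, hl1, hl0⟩ :=
      ((hlim.eventually (ge_mem_nhds one_pos)).and (eventually_gt_atTop 0)).exists
    refine ⟨l, hl0, le_trans ?_ hl1⟩
    rw [← integral_const_mul]
    exact integral_mono (hint_l l hl0) (hint.const_mul _) (hscaled l hl0)
  have habove : ∀ l ∈ {l : ℝ | 0 < l ∧ ∫ x, Ψ (|u x| / l) ∂μ ≤ 1}, I ≤ max (l ^ a) (l ^ b) := by
    rintro l ⟨hl0, hl1⟩
    have hmax0 : 0 ≤ max (l ^ a) (l ^ b) := le_max_of_le_left (Real.rpow_nonneg hl0.le a)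
    calc I ≤ ∫ x, max (l ^ a) (l ^ b) * Ψ (|u x| / l) ∂μ := by
          refine integral_mono hint ((hint_l l hl0).const_mul _) fun x => ?_
          simpa [mul_div_cancel₀ _ hl0.ne'] using
            hΨ.le_max_rpow_mul hab hl0 (div_nonneg (abs_nonneg (u x)) hl0.le)
      _ = max (l ^ a) (l ^ b) * ∫ x, Ψ (|u x| / l) ∂μ := integral_const_mul _ _
      _ ≤ max (l ^ a) (l ^ b) := mul_le_of_le_one_right hmax0 hl1
  have hcont : Continuous fun l : ℝ => max (l ^ a) (l ^ b) :=
    (Real.continuous_rpow_const ha.le).max (Real.continuous_rpow_const hb.le)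
  exact (isClosed_le continuous_const hcont).closure_subset_iff.2 habove
    (csInf_mem_closure hne ⟨0, fun _ h => h.1.le⟩)

end Luxemburg

theorem continuousOn_Ici_of_tendsto_nhdsGT {p : ℝ → ℝ} (hp : ContinuousOn p (Ioi 0))
    (h0 : Tendsto p (𝓝[>] 0) (𝓝 (p 0))) : ContinuousOn p (Ici 0) := by
  intro x (hx : 0 ≤ x)
  rcases hx.eq_or_lt with rfl | hx
  · exact continuousWithinAt_Ioi_iff_Ici.1 h0
  · exact (hp.continuousAt (Ioi_mem_nhds hx)).continuousWithinAt

theorem StrictMonoOn.Ici_of_Ioi {p : ℝ → ℝ} (hp : StrictMonoOn p (Ioi 0))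
    (h0 : ∀ t > 0, p 0 < p t) : StrictMonoOn p (Ici 0) := by
  intro a (ha : 0 ≤ a) b _ hab
  rcases ha.eq_or_lt with rfl | ha
  · exact h0 b hab
  · exact hp ha (ha.trans hab) hab

theorem scalesBetween_integral {p p' : ℝ → ℝ} {ℓ m : ℝ} (hℓ : 0 ≤ ℓ) (hm : 0 ≤ m)
    (hcont : ContinuousOn p (Ici 0)) (hmono : MonotoneOn p (Ici 0)) (hp0 : p 0 = 0)
    (hp : ∀ x > 0, HasDerivAt p (p' x) x)
    (hbounds : ∀ x > 0, (ℓ - 1) * p x ≤ x * p' x ∧ x * p' x ≤ (m - 1) * p x) :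
    ScalesBetween (fun t => ∫ s in (0:ℝ)..t, p s) ℓ m := by
  intro t (ht : 0 ≤ t) k hk
  rcases ht.eq_or_lt with rfl | ht
  · simp
  have hΦ := fun x (hx : 0 < x) => hasDerivAt_integral_of_continuousOn_Ici hcont hx
  exact ⟨rpow_mul_le_of_mul_le_mul_deriv hΦ (fun x hx =>
      mul_integral_le_mul_apply hℓ hcont hmono hp0 hp (fun y hy => (hbounds y hy).1) hx) ht hk,
    le_rpow_mul_of_mul_deriv_le_mul hΦ (fun x hx =>
      mul_apply_le_mul_integral hm hcont hmono hp0 hp (fun y hy => (hbounds y hy).2) hx) ht hk⟩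

theorem StrictMonoOn.monotoneOn_of_rightInverse {F g : ℝ → ℝ} (hF : StrictMonoOn F (Ici 0))
    (hg : ∀ s ∈ Ici (0:ℝ), 0 ≤ g s ∧ F (g s) = s) : MonotoneOn g (Ici 0) :=
  fun a ha b hb hab => (hF.le_iff_le (hg a ha).1 (hg b hb).1).1 (by rwa [(hg a ha).2, (hg b hb).2])

section NFunction

variable {φ : ℝ → ℝ} {ℓ m : ℝ}

theorem Phi_zero (φ : ℝ → ℝ) : Phi φ 0 = 0 := intervalIntegral.integral_same

theorem continuousOn_Ici_id_mul (hφ_C2 : ContDiffOn ℝ 2 φ (Ioi 0))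
    (hφ1₀ : Tendsto (fun t => t * φ t) (𝓝[>] 0) (𝓝 0)) :
    ContinuousOn (fun t => t * φ t) (Ici 0) :=
  continuousOn_Ici_of_tendsto_nhdsGT (continuousOn_id.mul hφ_C2.continuousOn)
    (by simpa using hφ1₀)

theorem Phi_strictMonoOn (hφ_pos : ∀ t > 0, 0 < φ t) (hφ_C2 : ContDiffOn ℝ 2 φ (Ioi 0))
    (hφ1₀ : Tendsto (fun t => t * φ t) (𝓝[>] 0) (𝓝 0)) : StrictMonoOn (Phi φ) (Ici 0) :=
  strictMonoOn_integral_of_pos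
    (fun _ ht => (continuousOn_Ici_id_mul hφ_C2 hφ1₀).intervalIntegrable_zero_of_Ici ht)
    fun t ht => mul_pos ht (hφ_pos t ht)

theorem Phi_scalesBetween (hφ_pos : ∀ t > 0, 0 < φ t) (hφ_C2 : ContDiffOn ℝ 2 φ (Ioi 0))
    (hℓ : 1 < ℓ) (hℓm : ℓ ≤ m) (hφ1₀ : Tendsto (fun t => t * φ t) (𝓝[>] 0) (𝓝 0))
    (hφ2 : StrictMonoOn (fun t => t * φ t) (Ioi 0))
    (hφ3 : ∀ t > 0,
      (ℓ - 2) * deriv (fun s => s * φ s) t ≤ t * deriv (deriv (fun s => s * φ s)) t ∧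
      t * deriv (deriv (fun s => s * φ s)) t ≤ (m - 2) * deriv (fun s => s * φ s) t) :
    ScalesBetween (Phi φ) ℓ m := by
  have hpos : ∀ t > 0, 0 < t * φ t := fun t ht => mul_pos ht (hφ_pos t ht)
  have hp_C2 : ContDiffOn ℝ 2 (fun t => t * φ t) (Ioi 0) := contDiffOn_id.mul hφ_C2
  have hmono : StrictMonoOn (fun t => t * φ t) (Ici 0) :=
    hφ2.Ici_of_Ioi fun t ht => by simpa using hpos t ht
  exact scalesBetween_integral (by linarith) (by linarith) (continuousOn_Ici_id_mul hφ_C2 hφ1₀)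
    hmono.monotoneOn (zero_mul _) (fun x hx => (hasDerivAt_deriv_of_contDiffOn_Ioi hp_C2 hx).1)
    fun x hx => ⟨sub_one_mul_le_mul_deriv hp_C2 (hφ2.monotoneOn) hφ1₀ (fun y hy => (hφ3 y hy).1) hx,
      mul_deriv_le_sub_one_mul hp_C2 hpos (by linarith) (fun y hy => (hφ3 y hy).2) hx⟩

end NFunction

section SobolevConjugate

variable {Phinv : ℝ → ℝ} {ℓ m N : ℝ}

theorem neg_one_lt_inv_add_neg_div (hm : 0 < m) (hmN : m < N) : -1 < m⁻¹ + -(N + 1) / N := by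
  have hN : 0 < N := hm.trans hmN
  have : -(N + 1) / N = -1 - N⁻¹ := by field_simp; ring
  linarith [(inv_lt_inv₀ hN hm).2 hmN]

theorem sobG_scalesBetween (hinv : ScalesBetween Phinv m⁻¹ ℓ⁻¹) (hinv0 : ∀ s ≥ 0, 0 ≤ Phinv s)
    (hm : 0 < m) (hmN : m < N) : ScalesBetween (sobG Phinv N) (m⁻¹ - N⁻¹) (ℓ⁻¹ - N⁻¹) := by
  have hN : 0 < N := hm.trans hmN
  have he : ∀ c : ℝ, 1 + c + -(N + 1) / N = c - N⁻¹ := fun c => by field_simp; ring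
  have h := hinv.integral_mul_rpow (e := -(N + 1) / N) (inv_nonneg.2 hm.le) hinv0
    (neg_one_lt_inv_add_neg_div hm hmN)
  rwa [he, he] at h

theorem sobG_strictMonoOn (hinv : ScalesBetween Phinv m⁻¹ ℓ⁻¹) (hinv0 : ∀ s ≥ 0, 0 ≤ Phinv s)
    (hinv_pos : ∀ s > 0, 0 < Phinv s) (hm : 0 < m) (hmN : m < N) :
    StrictMonoOn (sobG Phinv N) (Ici 0) :=
  strictMonoOn_integral_of_pos
    (fun _ ht => hinv.intervalIntegrable_mul_rpow (inv_nonneg.2 hm.le) hinv0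
      (neg_one_lt_inv_add_neg_div hm hmN) ht)
    fun t ht => mul_pos (hinv_pos t ht) (Real.rpow_pos_of_pos ht _)

theorem inv_inv_sub_inv {c N : ℝ} (hc : 0 < c) (hcN : c < N) :
    (c⁻¹ - N⁻¹)⁻¹ = c * N / (N - c) := by
  have : N - c ≠ 0 := by linarith
  have : N ≠ 0 := by linarith
  field_simp

theorem Phistar_scalesBetween {Phistar : ℝ → ℝ}
    (hG : ScalesBetween (sobG Phinv N) (m⁻¹ - N⁻¹) (ℓ⁻¹ - N⁻¹))
    (hGmono : StrictMonoOn (sobG Phinv N) (Ici 0))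
    (hPhistar : ∀ t ∈ Ici (0:ℝ), 0 ≤ Phistar t ∧ sobG Phinv N (Phistar t) = t)
    (hℓ : 0 < ℓ) (hℓm : ℓ ≤ m) (hmN : m < N) :
    ScalesBetween Phistar (ℓ * N / (N - ℓ)) (m * N / (N - m)) := by
  have hm : 0 < m := hℓ.trans_le hℓm
  have hinv_lt : N⁻¹ < m⁻¹ := (inv_lt_inv₀ (hm.trans hmN) hm).2 hmN
  have hinv_le : m⁻¹ ≤ ℓ⁻¹ := (inv_le_inv₀ hm hℓ).2 hℓm
  rw [← inv_inv_sub_inv hℓ (hℓm.trans_lt hmN), ← inv_inv_sub_inv hm hmN]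
  exact hG.rightInverse (by linarith) (by linarith) hGmono hPhistar

end SobolevConjugate

theorem stmt_16_general (φ : ℝ → ℝ) (ℓ m : ℝ)
    (hφ_pos : ∀ t > 0, 0 < φ t)
    (hφ_C2 : ContDiffOn ℝ 2 φ (Set.Ioi 0))
    (hℓ : 1 < ℓ) (hℓm : ℓ ≤ m)
    (hφ1₀ : Tendsto (fun t => t * φ t) (nhdsWithin 0 (Set.Ioi 0)) (nhds 0))
    (hφ2 : StrictMonoOn (fun t => t * φ t) (Set.Ioi 0))
    (hφ3 : ∀ t > 0,
      (ℓ - 2) * deriv (fun s => s * φ s) t ≤ t * deriv (deriv (fun s => s * φ s)) t ∧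
      t * deriv (deriv (fun s => s * φ s)) t ≤ (m - 2) * deriv (fun s => s * φ s) t)
    (N : ℝ) (hN : m < N)
    (Phinv : ℝ → ℝ)
    (hPhinv : ∀ s ∈ Set.Ici (0:ℝ), 0 ≤ Phinv s ∧ Phi φ (Phinv s) = s)
    (Phistar : ℝ → ℝ)
    (hPhistar : ∀ t ∈ Set.Ici (0:ℝ), 0 ≤ Phistar t ∧ sobG Phinv N (Phistar t) = t)
    (lstar mstar : ℝ) (hlstar : lstar = ℓ * N / (N - ℓ)) (hmstar : mstar = m * N / (N - m))
    {Ω : Type*} [MeasurableSpace Ω] (μ : Measure Ω) (u : Ω → ℝ)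
    (hu_meas : Measurable u)
    (hu_int : Integrable (fun x => Phistar (|u x|)) μ) :
    min (luxNorm μ Phistar u ^ lstar) (luxNorm μ Phistar u ^ mstar) ≤
        (∫ x, Phistar (|u x|) ∂μ) ∧
    (∫ x, Phistar (|u x|) ∂μ) ≤
        max (luxNorm μ Phistar u ^ lstar) (luxNorm μ Phistar u ^ mstar) := by
  have hℓ0 : 0 < ℓ := one_pos.trans hℓ
  have hm0 : 0 < m := hℓ0.trans_le hℓm
  have hN0 : 0 < N := hm0.trans hN
  have hΦmono := Phi_strictMonoOn hφ_pos hφ_C2 hφ1₀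
  have hΦinv : ScalesBetween Phinv m⁻¹ ℓ⁻¹ :=
    (Phi_scalesBetween hφ_pos hφ_C2 hℓ hℓm hφ1₀ hφ2 hφ3).rightInverse hℓ0 hm0 hΦmono hPhinv
  have hΦinv0 : ∀ s ≥ 0, 0 ≤ Phinv s := fun s hs => (hPhinv s hs).1
  have hΦinv_pos : ∀ s > 0, 0 < Phinv s := fun s hs =>
    (hΦinv0 s hs.le).lt_of_ne fun h => hs.ne (by simpa [← h, Phi_zero] using (hPhinv s hs.le).2)
  have hGmono := sobG_strictMonoOn hΦinv hΦinv0 hΦinv_pos hm0 hN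
  have hΦstar : ScalesBetween Phistar lstar mstar := hlstar ▸ hmstar ▸
    Phistar_scalesBetween (sobG_scalesBetween hΦinv hΦinv0 hm0 hN) hGmono hPhistar hℓ0 hℓm hN
  have hlstar0 : 0 < lstar := hlstar ▸ div_pos (mul_pos hℓ0 hN0) (by linarith)
  have hlstar_le : lstar ≤ mstar := by
    rw [hlstar, hmstar, ← inv_inv_sub_inv hℓ0 (hℓm.trans_lt hN), ← inv_inv_sub_inv hm0 hN]
    exact inv_anti₀ (by linarith [(inv_lt_inv₀ hN0 hm0).2 hN])
      (by linarith [(inv_le_inv₀ hm0 hℓ0).2 hℓm])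
  have hΦstar0 : ∀ t ≥ 0, 0 ≤ Phistar t := fun t ht => (hPhistar t ht).1
  exact ⟨min_rpow_luxNorm_le_integral hΦstar hlstar0 hlstar_le hΦstar0 hu_int,
    integral_le_max_rpow_luxNorm hΦstar hlstar0 hlstar_le hΦstar0
      (hGmono.monotoneOn_of_rightInverse hPhistar) hu_meas hu_int⟩

/-- with the Luxemburg norm `‖·‖_{Φ*}`, one has
`min{‖u‖_{Φ*}^{ℓ*}, ‖u‖_{Φ*}^{m*}} ≤ ∫_Ω Φ*(|u|) dμ ≤ max{‖u‖_{Φ*}^{ℓ*}, ‖u‖_{Φ*}^{m*}}`. -/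
theorem stmt_16 (φ : ℝ → ℝ) (ℓ m : ℝ)
    (hφ_pos : ∀ t > 0, 0 < φ t)
    (hφ_C2 : ContDiffOn ℝ 2 φ (Set.Ioi 0))
    (hℓ : 1 < ℓ) (hℓm : ℓ ≤ m)
    (hφ1₀ : Tendsto (fun t => t * φ t) (nhdsWithin 0 (Set.Ioi 0)) (nhds 0))
    (hφ1top : Tendsto (fun t => t * φ t) atTop atTop)
    (hφ2 : StrictMonoOn (fun t => t * φ t) (Set.Ioi 0))
    (hφ3 : ∀ t > 0,
      (ℓ - 2) * deriv (fun s => s * φ s) t ≤ t * deriv (deriv (fun s => s * φ s)) t ∧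
      t * deriv (deriv (fun s => s * φ s)) t ≤ (m - 2) * deriv (fun s => s * φ s) t)
    (N : ℝ) (hN : m < N)
    (Phinv : ℝ → ℝ)
    (hPhinv : ∀ s ∈ Set.Ici (0:ℝ), 0 ≤ Phinv s ∧ Phi φ (Phinv s) = s)
    (hPhinv2 : ∀ t ∈ Set.Ici (0:ℝ), Phinv (Phi φ t) = t)
    (Phistar : ℝ → ℝ)
    (hPhistar : ∀ t ∈ Set.Ici (0:ℝ), 0 ≤ Phistar t ∧ sobG Phinv N (Phistar t) = t)
    (hPhistar2 : ∀ t ∈ Set.Ici (0:ℝ), Phistar (sobG Phinv N t) = t)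
    (lstar mstar : ℝ) (hlstar : lstar = ℓ * N / (N - ℓ)) (hmstar : mstar = m * N / (N - m))
    {Ω : Type*} [MeasurableSpace Ω] (μ : Measure Ω) (u : Ω → ℝ)
    (hu_meas : Measurable u)
    (hu_int : Integrable (fun x => Phistar (|u x|)) μ)
    (hu_pos : 0 < ∫ x, Phistar (|u x|) ∂μ) :
    min (luxNorm μ Phistar u ^ lstar) (luxNorm μ Phistar u ^ mstar) ≤
        (∫ x, Phistar (|u x|) ∂μ) ∧
    (∫ x, Phistar (|u x|) ∂μ) ≤
        max (luxNorm μ Phistar u ^ lstar) (luxNorm μ Phistar u ^ mstar) :=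
  stmt_16_general φ ℓ m hφ_pos hφ_C2 hℓ hℓm hφ1₀ hφ2 hφ3 N hN Phinv hPhinv Phistar hPhistar lstar
    mstar hlstar hmstar μ u hu_meas hu_int
end
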